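/- If P is an n×n row-stochastic matrix, π its stationary distribution, D = diag(1/π_i), E = ee^T, and M satisfies P(M−D) = M−E, then the scalar K := πᵀMπ satisfies Mπ = Ke, provided the eigenspace of P for eigenvalue 1 is spanned by e. -/
import Mathlib


open Matrix

theorem kemeny_constant_general (n : ℕ) (P M : Matrix (Fin n) (Fin n) ℝ)
    (π : Fin n → ℝ)
    (hnonneg : ∀ i j, 0 ≤ P i j)
    (hstoch : ∀ i, ∑ j, P i j = 1)
    (hπpos : ∀ i, 0 < π i)
    (hsum : ∑ i, π i = 1)
    (hstat : Pᵀ *ᵥ π = π)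
    (D : Matrix (Fin n) (Fin n) ℝ) (hD : D = Matrix.diagonal fun i => (π i)⁻¹)
    (E : Matrix (Fin n) (Fin n) ℝ) (hE : E = Matrix.of fun _ _ => (1 : ℝ))
    (hM : P * (M - D) = M - E)
    (e : Fin n → ℝ) (he : e = fun _ => 1)
    (heig : {v : Fin n → ℝ | P *ᵥ v = v} =
      (Submodule.span ℝ {e} : Submodule ℝ (Fin n → ℝ)))
    (K : ℝ) (hK : K = π ⬝ᵥ (M *ᵥ π)) :
    M *ᵥ π = K • e := by
  have hDπ : D *ᵥ π = e := by
    subst hD he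
    funext i
    simp [Matrix.mulVec_diagonal, (hπpos i).ne']
  have hEπ : E *ᵥ π = e := by
    subst hE he
    funext i
    simp [Matrix.mulVec, dotProduct, hsum]
  have hPe : P *ᵥ e = e := by
    subst he
    funext i
    simp [Matrix.mulVec, dotProduct, hstoch i]
  have hfix : P *ᵥ (M *ᵥ π) = M *ᵥ π := by
    have h : P *ᵥ ((M - D) *ᵥ π) = (M - E) *ᵥ π := by
      rw [Matrix.mulVec_mulVec, hM]
    rw [Matrix.sub_mulVec, Matrix.sub_mulVec, hDπ, hEπ, Matrix.mulVec_sub, hPe] at h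
    linear_combination (norm := module) h
  have hmem : M *ᵥ π ∈ (Submodule.span ℝ {e} : Submodule ℝ (Fin n → ℝ)) := by
    have h2 : M *ᵥ π ∈ {v : Fin n → ℝ | P *ᵥ v = v} := hfix
    rwa [heig] at h2
  obtain ⟨c, hc⟩ := Submodule.mem_span_singleton.mp hmem
  have hπe : π ⬝ᵥ e = 1 := by subst he; simpa [dotProduct] using hsum
  have hKc : K = c := by
    rw [hK, ← hc, dotProduct_smul, hπe]; simp
  rw [← hc, hKc]
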